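/- Let a > -1 and 0 < b < 1 with b < a+1. Then there exist constants c_{a,b} > 0 and K_{a,b} > 0 such that for all 0 ≤ s ≤ t, c_{a,b} · t^a (t-s)^{1+b} ≤ R^{a,b}(t,t) - 2R^{a,b}(t,s) + R^{a,b}(s,s) ≤ K_{a,b} · t^a (t-s)^{1+b}, where R^{a,b}(t,s) = ∫₀^{min(s,t)} u^a[(t-u)^b + (s-u)^b] du. Note R^{a,b}(t,t) - 2R^{a,b}(t,s) + R^{a,b}(s,s) equals the second moment E[(B^{a,b}(t) - B^{a,b}(s))²] of the increment of the weighted fBm. -/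

import Mathlib

open MeasureTheory intervalIntegral

lemma wfbm_cont_rpow {b : ℝ} (hb : 0 < b) : Continuous (fun x : ℝ => x ^ b) := by
  rw [continuous_iff_continuousAt]
  intro x
  exact Real.continuousAt_rpow_const x b (Or.inr hb.le)

lemma wfbm_integrable (a b t p q : ℝ) (ha : -1 < a) (hb : 0 < b) :
    IntervalIntegrable (fun u : ℝ => u ^ a * (t - u) ^ b) volume p q := by
  apply IntervalIntegrable.mul_continuousOn (intervalIntegrable_rpow' ha)
  exact ((wfbm_cont_rpow hb).comp (continuous_const.sub continuous_id)).continuousOn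

lemma wfbm_integral_tsub (b t p q : ℝ) (hb : 0 < b) :
    ∫ u in p..q, (t - u) ^ b = ((t - p) ^ (b + 1) - (t - q) ^ (b + 1)) / (b + 1) := by
  rw [intervalIntegral.integral_comp_sub_left (fun x => x ^ b) t,
    integral_rpow (Or.inl (by linarith : (-1:ℝ) < b))]

lemma wfbm_E_eq (a b s t : ℝ) (ha : -1 < a) (hb : 0 < b) :
    (∫ u in (0:ℝ)..t, u ^ a * ((t - u) ^ b + (t - u) ^ b))
      - 2 * (∫ u in (0:ℝ)..s, u ^ a * ((t - u) ^ b + (s - u) ^ b))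
      + (∫ u in (0:ℝ)..s, u ^ a * ((s - u) ^ b + (s - u) ^ b))
    = 2 * ∫ u in s..t, u ^ a * (t - u) ^ b := by
  have hts := wfbm_integrable a b t 0 s ha hb
  have hts2 := wfbm_integrable a b t s t ha hb
  have hss := wfbm_integrable a b s 0 s ha hb
  have h1 : (∫ u in (0:ℝ)..t, u ^ a * ((t - u) ^ b + (t - u) ^ b))
      = 2 * ((∫ u in (0:ℝ)..s, u ^ a * (t - u) ^ b) + ∫ u in s..t, u ^ a * (t - u) ^ b) := by
    rw [integral_add_adjacent_intervals hts hts2, ← intervalIntegral.integral_const_mul]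
    congr 1; ext u; ring
  have h2 : (∫ u in (0:ℝ)..s, u ^ a * ((t - u) ^ b + (s - u) ^ b))
      = (∫ u in (0:ℝ)..s, u ^ a * (t - u) ^ b) + ∫ u in (0:ℝ)..s, u ^ a * (s - u) ^ b := by
    rw [← intervalIntegral.integral_add hts hss]
    congr 1; ext u; ring
  have h3 : (∫ u in (0:ℝ)..s, u ^ a * ((s - u) ^ b + (s - u) ^ b))
      = 2 * ∫ u in (0:ℝ)..s, u ^ a * (s - u) ^ b := by
    rw [← intervalIntegral.integral_const_mul]; congr 1; ext u; ring
  rw [h1, h2, h3]; ring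

lemma wfbm_half_rpow (a t : ℝ) (ht : 0 ≤ t) : (t / 2) ^ a = 2 ^ (-a) * t ^ a := by
  rw [div_eq_mul_inv, Real.mul_rpow ht (by norm_num), Real.inv_rpow (by norm_num),
    ← Real.rpow_neg (by norm_num)]
  ring

lemma wfbm_base (a t u : ℝ) (ht : 0 < t) (h1 : t / 2 ≤ u) (h2 : u ≤ t) :
    min ((2:ℝ) ^ (-a)) 1 * t ^ a ≤ u ^ a ∧ u ^ a ≤ max ((2:ℝ) ^ (-a)) 1 * t ^ a := by
  have hu : (0:ℝ) < u := lt_of_lt_of_le (by linarith) h1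
  have hta : (0:ℝ) ≤ t ^ a := Real.rpow_nonneg ht.le a
  have hhalf : (t / 2) ^ a = 2 ^ (-a) * t ^ a := wfbm_half_rpow a t ht.le
  rcases le_or_gt 0 a with hA | hA
  · constructor
    · calc min ((2:ℝ) ^ (-a)) 1 * t ^ a ≤ 2 ^ (-a) * t ^ a :=
            mul_le_mul_of_nonneg_right (min_le_left _ _) hta
        _ = (t / 2) ^ a := hhalf.symm
        _ ≤ u ^ a := Real.rpow_le_rpow (by linarith) h1 hA
    · calc u ^ a ≤ t ^ a := Real.rpow_le_rpow hu.le h2 hA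
        _ = 1 * t ^ a := (one_mul _).symm
        _ ≤ max ((2:ℝ) ^ (-a)) 1 * t ^ a :=
            mul_le_mul_of_nonneg_right (le_max_right _ _) hta
  · constructor
    · calc min ((2:ℝ) ^ (-a)) 1 * t ^ a ≤ 1 * t ^ a :=
            mul_le_mul_of_nonneg_right (min_le_right _ _) hta
        _ = t ^ a := one_mul _
        _ ≤ u ^ a := Real.rpow_le_rpow_of_nonpos hu h2 hA.le
    · calc u ^ a ≤ (t / 2) ^ a := Real.rpow_le_rpow_of_nonpos (by linarith) h1 hA.le
        _ = 2 ^ (-a) * t ^ a := hhalf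
        _ ≤ max ((2:ℝ) ^ (-a)) 1 * t ^ a :=
            mul_le_mul_of_nonneg_right (le_max_left _ _) hta

lemma wfbm_lower (a b s t : ℝ) (ha : -1 < a) (hb : 0 < b) (hs : 0 ≤ s) (hst : s ≤ t) :
    min ((2:ℝ) ^ (-a)) 1 / 4 ^ (1 + b) * t ^ a * (t - s) ^ (1 + b)
      ≤ ∫ u in s..t, u ^ a * (t - u) ^ b := by
  rcases eq_or_lt_of_le hst with rfl | hlt
  · simp [Real.zero_rpow (by positivity : (1:ℝ) + b ≠ 0)]
  have ht : (0:ℝ) < t := lt_of_le_of_lt hs hlt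
  set m := min ((2:ℝ) ^ (-a)) 1 with hm
  have hm0 : 0 < m := lt_min (Real.rpow_pos_of_pos two_pos _) one_pos
  set m1 := (s + t) / 2 with hm1
  set m2 := (s + 3 * t) / 4 with hm2
  have h01 : s ≤ m1 := by rw [hm1]; linarith
  have h12 : m1 ≤ m2 := by rw [hm1, hm2]; linarith
  have h2t : m2 ≤ t := by rw [hm2]; linarith
  have hth : t / 2 ≤ m1 := by rw [hm1]; linarith
  have hsplit : (∫ u in s..t, u ^ a * (t - u) ^ b)
      = (∫ u in s..m1, u ^ a * (t - u) ^ b) + (∫ u in m1..m2, u ^ a * (t - u) ^ b)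
        + (∫ u in m2..t, u ^ a * (t - u) ^ b) := by
    rw [integral_add_adjacent_intervals (wfbm_integrable a b t s m1 ha hb)
      (wfbm_integrable a b t m1 m2 ha hb),
      integral_add_adjacent_intervals (wfbm_integrable a b t s m2 ha hb)
      (wfbm_integrable a b t m2 t ha hb)]
  have hnn : ∀ p q : ℝ, 0 ≤ p → p ≤ q → q ≤ t →
      0 ≤ ∫ u in p..q, u ^ a * (t - u) ^ b := by
    intro p q hp hpq hqt
    apply intervalIntegral.integral_nonneg hpq
    intro u hu
    exact mul_nonneg (Real.rpow_nonneg (le_trans hp hu.1) a)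
      (Real.rpow_nonneg (by linarith [hu.2]) b)
  have hmid : (t - s) / 4 * (m * t ^ a * ((t - s) / 4) ^ b)
      ≤ ∫ u in m1..m2, u ^ a * (t - u) ^ b := by
    have hmono := intervalIntegral.integral_mono_on (μ := volume)
      (f := fun _ : ℝ => m * t ^ a * ((t - s) / 4) ^ b)
      (g := fun u : ℝ => u ^ a * (t - u) ^ b) h12
      intervalIntegrable_const (wfbm_integrable a b t m1 m2 ha hb) ?_
    · rw [intervalIntegral.integral_const, smul_eq_mul] at hmono
      have he : m2 - m1 = (t - s) / 4 := by rw [hm1, hm2]; ring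
      rw [he] at hmono
      exact hmono
    · intro u hu
      have hb1 := wfbm_base a t u ht (le_trans hth hu.1) (le_trans hu.2 h2t)
      have hum2 : u ≤ m2 := hu.2
      rw [hm2] at hum2
      have hfb : ((t - s) / 4) ^ b ≤ (t - u) ^ b :=
        Real.rpow_le_rpow (by linarith) (by linarith) hb.le
      exact mul_le_mul hb1.1 hfb (Real.rpow_nonneg (by linarith) b)
        (le_trans (mul_nonneg hm0.le (Real.rpow_nonneg ht.le a)) hb1.1)
  have hkey : m / 4 ^ (1 + b) * t ^ a * (t - s) ^ (1 + b)
      = (t - s) / 4 * (m * t ^ a * ((t - s) / 4) ^ b) := by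
    rw [Real.div_rpow (by linarith : (0:ℝ) ≤ t - s) (by norm_num : (0:ℝ) ≤ 4),
      Real.rpow_add (by linarith : (0:ℝ) < t - s), Real.rpow_one,
      Real.rpow_add (by norm_num : (0:ℝ) < 4), Real.rpow_one]
    have h4b : (0:ℝ) < 4 ^ b := Real.rpow_pos_of_pos (by norm_num) b
    field_simp
  rw [hkey, hsplit]
  have n1 := hnn s m1 hs h01 (le_trans h12 h2t)
  have n3 := hnn m2 t (by rw [hm2]; linarith) h2t le_rfl
  linarith
lemma wfbm_upper (a b s t : ℝ) (ha : -1 < a) (hb : 0 < b) (hs : 0 ≤ s) (hst : s ≤ t) :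
    ∫ u in s..t, u ^ a * (t - u) ^ b ≤
      (max ((2:ℝ) ^ (-a)) 1 / (b + 1)
        + 2 ^ (b + 1) * (2 ^ (-(a + 1)) / (a + 1)
          + max ((2:ℝ) ^ (-a)) 1 * 2 ^ (-(b + 1)) / (b + 1))) * t ^ a * (t - s) ^ (b + 1) := by
  set M := max ((2:ℝ) ^ (-a)) 1 with hM
  have hM1 : (1:ℝ) ≤ M := le_max_right _ _
  have hM0 : (0:ℝ) < M := lt_of_lt_of_le one_pos hM1
  set C1 := (2:ℝ) ^ (-(a + 1)) / (a + 1) with hC1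
  set C2 := M * 2 ^ (-(b + 1)) / (b + 1) with hC2
  have hC1p : 0 < C1 := div_pos (Real.rpow_pos_of_pos two_pos _) (by linarith)
  have hC2p : 0 < C2 := div_pos (mul_pos hM0 (Real.rpow_pos_of_pos two_pos _)) (by linarith)
  set K := M / (b + 1) + 2 ^ (b + 1) * (C1 + C2) with hK
  have h2b : (0:ℝ) < 2 ^ (b + 1) := Real.rpow_pos_of_pos two_pos _
  rcases eq_or_lt_of_le (hs.trans hst) with rfl' | ht
  · have hs0 : s = 0 := le_antisymm (hst.trans rfl'.symm.le) hs
    rw [hs0, ← rfl']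
    simp [Real.zero_rpow (by positivity : b + 1 ≠ 0)]
  have hta : (0:ℝ) ≤ t ^ a := Real.rpow_nonneg ht.le a
  have hX : (0:ℝ) ≤ t ^ a * (t - s) ^ (b + 1) :=
    mul_nonneg hta (Real.rpow_nonneg (by linarith) _)
  rcases le_or_gt (t / 2) s with hcase | hcase
  · -- s ≥ t/2
    have h1 : ∫ u in s..t, u ^ a * (t - u) ^ b
        ≤ ∫ u in s..t, M * t ^ a * (t - u) ^ b := by
      apply intervalIntegral.integral_mono_on hst (wfbm_integrable a b t s t ha hb)
        ((intervalIntegrable_const.mul_continuousOn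
          (((wfbm_cont_rpow hb).comp (continuous_const.sub continuous_id)).continuousOn)))
      intro u hu
      exact mul_le_mul_of_nonneg_right
        ((wfbm_base a t u ht (hcase.trans hu.1) hu.2).2)
        (Real.rpow_nonneg (by linarith [hu.2]) b)
    have h2 : ∫ u in s..t, M * t ^ a * (t - u) ^ b
        = M / (b + 1) * (t ^ a * (t - s) ^ (b + 1)) := by
      rw [intervalIntegral.integral_const_mul, wfbm_integral_tsub b t s t hb, sub_self,
        Real.zero_rpow (by positivity : b + 1 ≠ 0)]
      ring
    have h3 : M / (b + 1) * (t ^ a * (t - s) ^ (b + 1)) ≤ K * (t ^ a * (t - s) ^ (b + 1)) := by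
      apply mul_le_mul_of_nonneg_right _ hX
      rw [hK]; nlinarith
    calc ∫ u in s..t, u ^ a * (t - u) ^ b ≤ M / (b + 1) * (t ^ a * (t - s) ^ (b + 1)) :=
          h2 ▸ h1
      _ ≤ K * (t ^ a * (t - s) ^ (b + 1)) := h3
      _ = K * t ^ a * (t - s) ^ (b + 1) := by ring
  · -- s < t/2
    have step1 : ∫ u in s..t, u ^ a * (t - u) ^ b ≤ ∫ u in (0:ℝ)..t, u ^ a * (t - u) ^ b := by
      apply intervalIntegral.integral_mono_interval hs hst le_rfl _
        (wfbm_integrable a b t 0 t ha hb)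
      filter_upwards [ae_restrict_mem measurableSet_Ioc] with u hu
      exact mul_nonneg (Real.rpow_nonneg hu.1.le a) (Real.rpow_nonneg (by linarith [hu.2]) b)
    have step2 : ∫ u in (0:ℝ)..t, u ^ a * (t - u) ^ b
        = (∫ u in (0:ℝ)..(t/2), u ^ a * (t - u) ^ b) + ∫ u in (t/2)..t, u ^ a * (t - u) ^ b :=
      (integral_add_adjacent_intervals (wfbm_integrable a b t 0 (t/2) ha hb)
        (wfbm_integrable a b t (t/2) t ha hb)).symm
    have hpow : t ^ (a + 1) * t ^ b = t ^ a * t ^ (b + 1) := by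
      rw [← Real.rpow_add ht, ← Real.rpow_add ht]; ring_nf
    have step3 : ∫ u in (0:ℝ)..(t/2), u ^ a * (t - u) ^ b ≤ C1 * (t ^ a * t ^ (b + 1)) := by
      have hle : ∫ u in (0:ℝ)..(t/2), u ^ a * (t - u) ^ b
          ≤ ∫ u in (0:ℝ)..(t/2), u ^ a * t ^ b := by
        apply intervalIntegral.integral_mono_on (by linarith)
          (wfbm_integrable a b t 0 (t/2) ha hb)
          ((intervalIntegrable_rpow' ha).mul_const _)
        intro u hu
        exact mul_le_mul_of_nonneg_left
          (Real.rpow_le_rpow (by linarith [hu.2]) (by linarith [hu.1]) hb.le)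
          (Real.rpow_nonneg hu.1 a)
      have heq : ∫ u in (0:ℝ)..(t/2), u ^ a * t ^ b = C1 * (t ^ a * t ^ (b + 1)) := by
        rw [intervalIntegral.integral_mul_const, integral_rpow (Or.inl ha),
          Real.zero_rpow (ne_of_gt (by linarith) : a + 1 ≠ 0), wfbm_half_rpow (a+1) t ht.le,
          hC1, ← hpow]
        ring
      linarith
    have step4 : ∫ u in (t/2)..t, u ^ a * (t - u) ^ b ≤ C2 * (t ^ a * t ^ (b + 1)) := by
      have hle : ∫ u in (t/2)..t, u ^ a * (t - u) ^ b
          ≤ ∫ u in (t/2)..t, M * t ^ a * (t - u) ^ b := by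
        apply intervalIntegral.integral_mono_on (by linarith)
          (wfbm_integrable a b t (t/2) t ha hb)
          ((intervalIntegrable_const.mul_continuousOn
            (((wfbm_cont_rpow hb).comp (continuous_const.sub continuous_id)).continuousOn)))
        intro u hu
        exact mul_le_mul_of_nonneg_right ((wfbm_base a t u ht hu.1 hu.2).2)
          (Real.rpow_nonneg (by linarith [hu.2]) b)
      have heq : ∫ u in (t/2)..t, M * t ^ a * (t - u) ^ b = C2 * (t ^ a * t ^ (b + 1)) := by
        rw [intervalIntegral.integral_const_mul, wfbm_integral_tsub b t (t/2) t hb, sub_self,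
          Real.zero_rpow (by positivity : b + 1 ≠ 0),
          (by ring : t - t/2 = t/2), wfbm_half_rpow (b+1) t ht.le, hC2]
        ring
      linarith
    have step5 : t ^ (b + 1) ≤ 2 ^ (b + 1) * (t - s) ^ (b + 1) := by
      calc t ^ (b + 1) ≤ (2 * (t - s)) ^ (b + 1) :=
            Real.rpow_le_rpow ht.le (by linarith) (by linarith)
        _ = 2 ^ (b + 1) * (t - s) ^ (b + 1) :=
            Real.mul_rpow (by norm_num) (by linarith)
    have step6 : t ^ a * t ^ (b + 1) ≤ 2 ^ (b + 1) * (t ^ a * (t - s) ^ (b + 1)) := by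
      calc t ^ a * t ^ (b + 1) ≤ t ^ a * (2 ^ (b + 1) * (t - s) ^ (b + 1)) :=
            mul_le_mul_of_nonneg_left step5 hta
        _ = 2 ^ (b + 1) * (t ^ a * (t - s) ^ (b + 1)) := by ring
    have hfin : ∫ u in s..t, u ^ a * (t - u) ^ b
        ≤ (C1 + C2) * (2 ^ (b + 1) * (t ^ a * (t - s) ^ (b + 1))) := by
      have h6 : (C1 + C2) * (t ^ a * t ^ (b + 1))
          ≤ (C1 + C2) * (2 ^ (b + 1) * (t ^ a * (t - s) ^ (b + 1))) :=
        mul_le_mul_of_nonneg_left step6 (by positivity)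
      linarith
    calc ∫ u in s..t, u ^ a * (t - u) ^ b
        ≤ (C1 + C2) * (2 ^ (b + 1) * (t ^ a * (t - s) ^ (b + 1))) := hfin
      _ = (2 ^ (b + 1) * (C1 + C2)) * (t ^ a * (t - s) ^ (b + 1)) := by ring
      _ ≤ K * (t ^ a * (t - s) ^ (b + 1)) := by
          apply mul_le_mul_of_nonneg_right _ hX
          rw [hK]
          nlinarith [div_pos hM0 (by linarith : (0:ℝ) < b + 1)]
      _ = K * t ^ a * (t - s) ^ (b + 1) := by ring

/-- Two-sided bound on the second moment of the increments of weighted fBm,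
expressed through the covariance function R(t,s). -/
theorem wfbm_increment_bounds (a b : ℝ) (ha : -1 < a) (hb0 : 0 < b) (hb1 : b < 1)
    (hba : b < a + 1) :
    ∃ c K : ℝ, 0 < c ∧ 0 < K ∧
      ∀ s t : ℝ, 0 ≤ s → s ≤ t →
        (let R : ℝ → ℝ → ℝ := fun t' s' =>
          ∫ u in (0:ℝ)..(min s' t'), u ^ a * ((t' - u) ^ b + (s' - u) ^ b);
        c * t ^ a * (t - s) ^ (1 + b) ≤ R t t - 2 * R t s + R s s ∧
          R t t - 2 * R t s + R s s ≤ K * t ^ a * (t - s) ^ (1 + b)) := by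
  have hmpos : 0 < min ((2:ℝ) ^ (-a)) 1 := lt_min (Real.rpow_pos_of_pos two_pos _) one_pos
  have hMpos : 0 < max ((2:ℝ) ^ (-a)) 1 := lt_of_lt_of_le one_pos (le_max_right _ _)
  refine ⟨2 * (min ((2:ℝ) ^ (-a)) 1 / 4 ^ (1 + b)),
    2 * (max ((2:ℝ) ^ (-a)) 1 / (b + 1)
      + 2 ^ (b + 1) * (2 ^ (-(a + 1)) / (a + 1)
        + max ((2:ℝ) ^ (-a)) 1 * 2 ^ (-(b + 1)) / (b + 1))), ?_, ?_, ?_⟩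
  · exact mul_pos two_pos (div_pos hmpos (Real.rpow_pos_of_pos (by norm_num) _))
  · refine mul_pos two_pos (add_pos (div_pos hMpos (by linarith))
      (mul_pos (Real.rpow_pos_of_pos two_pos _) (add_pos
        (div_pos (Real.rpow_pos_of_pos two_pos _) (by linarith))
        (div_pos (mul_pos hMpos (Real.rpow_pos_of_pos two_pos _)) (by linarith)))))
  · intro s t hs hst
    simp only [min_self, min_eq_left hst]
    rw [wfbm_E_eq a b s t ha hb0]
    have L := wfbm_lower a b s t ha hb0 hs hst
    have U := wfbm_upper a b s t ha hb0 hs hst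
    rw [show (1:ℝ) + b = b + 1 from add_comm 1 b] at L ⊢
    constructor
    · linarith
    · linarith
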